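/- For any type τ and kind κ, if Δ ⊢ τ : κ then Δ ⊢ bang(τ) : bang(κ), where bang(κ) = κ if {D,S} ⊆ κ, and bang(κ) = {D,S} otherwise. -/

import Mathlib

inductive Perm | D | S | E
deriving DecidableEq

abbrev Kind := Set Perm

inductive Mode | readOnly | writable | unboxed

def kindOf : Mode → Kind
  | .readOnly => {Perm.D, Perm.S}
  | .writable => {Perm.E}
  | .unboxed  => {Perm.D, Perm.S, Perm.E}

/-- Types, including observed type variables `ovar` (written α!). -/
inductive Ty
  | unit
  | prim
  | fn (a b : Ty)
  | var (n : ℕ)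
  | ovar (n : ℕ)
  | variant (ts : List Ty)
  | record (fs : List (Ty × Bool)) (m : Mode)

/-- bang on kinds. -/
noncomputable def bangKind (κ : Kind) : Kind :=
  open Classical in
  if ({Perm.D, Perm.S} : Kind) ⊆ κ then κ else {Perm.D, Perm.S}

/-- bang on modes. -/
def bangMode : Mode → Mode
  | .readOnly => .readOnly
  | .writable => .readOnly
  | .unboxed  => .unboxed

/-- bang on types. -/
def bangTy : Ty → Ty
  | .unit => .unit
  | .prim => .prim
  | .fn a b => .fn a b
  | .var n => .ovar n
  | .ovar n => .ovar n
  | .variant ts => .variant (ts.attach.map (fun t => bangTy t.1))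
  | .record fs m => .record (fs.attach.map (fun p => (bangTy p.1.1, p.1.2))) (bangMode m)
  decreasing_by
  · simp only [Ty.variant.sizeOf_spec]
    have := List.sizeOf_lt_of_mem t.2; omega
  · simp only [Ty.record.sizeOf_spec]
    have := List.sizeOf_lt_of_mem p.2
    cases hp : p.1 with | mk a b => rw [hp] at this; simp at this ⊢; omega

/-- The kinding judgement `Δ ⊢ τ : κ`. -/
inductive Kinding (Δ : ℕ → Kind) : Ty → Kind → Prop
  | unit : Kinding Δ .unit κ
  | prim : Kinding Δ .prim κ
  | fn : Kinding Δ (.fn a b) κ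
  | var : κ ⊆ Δ n → Kinding Δ (.var n) κ
  | ovar : κ ⊆ bangKind (Δ n) → Kinding Δ (.ovar n) κ
  | variant : (∀ t ∈ ts, Kinding Δ t κ) → Kinding Δ (.variant ts) κ
  | record : κ ⊆ kindOf m → (∀ p ∈ fs, p.2 = false → Kinding Δ p.1 κ) →
      Kinding Δ (.record fs m) κ

lemma bangKind_of_subset {κ : Kind} (h : {Perm.D, Perm.S} ⊆ κ) : bangKind κ = κ :=
  if_pos h

lemma bangKind_of_not_subset {κ : Kind} (h : ¬{Perm.D, Perm.S} ⊆ κ) :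
    bangKind κ = {Perm.D, Perm.S} :=
  if_neg h

lemma subset_bangKind (κ : Kind) : {Perm.D, Perm.S} ⊆ bangKind κ := by
  by_cases h : {Perm.D, Perm.S} ⊆ κ
  · rwa [bangKind_of_subset h]
  · rw [bangKind_of_not_subset h]

lemma bangKind_subset_union (κ : Kind) : bangKind κ ⊆ κ ∪ {Perm.D, Perm.S} := by
  by_cases h : {Perm.D, Perm.S} ⊆ κ
  · rw [bangKind_of_subset h]; exact Set.subset_union_left
  · rw [bangKind_of_not_subset h]; exact Set.subset_union_right

lemma bangKind_mono {κ κ' : Kind} (h : κ ⊆ κ') : bangKind κ ⊆ bangKind κ' := by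
  by_cases hκ : {Perm.D, Perm.S} ⊆ κ
  · rw [bangKind_of_subset hκ, bangKind_of_subset (hκ.trans h)]
    exact h
  · rw [bangKind_of_not_subset hκ]
    exact subset_bangKind κ'

@[simp]
lemma bangKind_bangKind (κ : Kind) : bangKind (bangKind κ) = bangKind κ :=
  bangKind_of_subset (subset_bangKind κ)

lemma bangKind_subset_kindOf_bangMode {κ : Kind} {m : Mode} (h : κ ⊆ kindOf m) :
    bangKind κ ⊆ kindOf (bangMode m) := by
  cases m with
  | readOnly =>
    simpa [kindOf, bangMode] using (bangKind_subset_union κ).trans (Set.union_subset h le_rfl)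
  | writable =>
    have hD : ¬{Perm.D, Perm.S} ⊆ κ := fun hDS => by
      simpa [kindOf] using h (hDS (Set.mem_insert _ _))
    rw [bangKind_of_not_subset hD]
    rfl
  | unboxed =>
    intro p _
    cases p <;> simp [kindOf, bangMode]

/-- Kinding for bang: if `Δ ⊢ τ : κ` then `Δ ⊢ bang(τ) : bang(κ)`. -/
theorem kinding_bang {Δ : ℕ → Kind} {τ : Ty} {κ : Kind}
    (h : Kinding Δ τ κ) : Kinding Δ (bangTy τ) (bangKind κ) := by
  induction h with
  | unit => rw [bangTy]; exact .unit
  | prim => rw [bangTy]; exact .prim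
  | fn => rw [bangTy]; exact .fn
  | var h => rw [bangTy]; exact .ovar (bangKind_mono h)
  | ovar h => rw [bangTy]; exact .ovar (bangKind_bangKind (Δ _) ▸ bangKind_mono h)
  | variant _ ih =>
    rw [bangTy]
    refine .variant fun t ht => ?_
    obtain ⟨⟨t, hmem⟩, -, rfl⟩ := List.mem_map.mp ht
    exact ih t hmem
  | record hm _ ih =>
    rw [bangTy]
    refine .record (bangKind_subset_kindOf_bangMode hm) fun p hp hp₂ => ?_
    obtain ⟨⟨p, hmem⟩, -, rfl⟩ := List.mem_map.mp hp
    exact ih p hmem hp₂
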